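/- (Minimal cost, simplified geometric version.) Let p > 1, a > 0, and let u be a divergence-free velocity field on [0,1] vanishing outside Q, with flow map Φ = Φ(1,·), and assume Lip(Φ^{−1}) ≤ exp(∫₀¹‖∇u(s,·)‖_{L^p}ds). Let ρ solve the continuity equation with initial datum equal to 1 on a set A ⊂ Q and to a mean-zero-making constant c ∈ [−1,0) on Q∖A, 0 < |A| ≤ 1/2, and suppose there is a ball B = B(x,r) ⊂ Q with r ≥ (3/4)a and B ⊂ A. Let λ be a tiling parameter with λ ≤ 3a/(16√2), and suppose ∫_Q ρ(1,y)dy = 0 for every tile Q ∈ T_λ. Then ∫₀¹‖∇u(s,·)‖_{L^p}ds ≥ log 2 > 0. -/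

import Mathlib

open MeasureTheory Metric Set Filter ENNReal Topology

noncomputable section

/-- Points of the plane. -/
abbrev Pt : Type := EuclideanSpace ℝ (Fin 2)

/-- The open unit square `Q = (−1/2, 1/2)²`. -/
def unitSq : Set Pt :=
  {x : Pt | x 0 ∈ Set.Ioo (-(1/2) : ℝ) (1/2) ∧ x 1 ∈ Set.Ioo (-(1/2) : ℝ) (1/2)}

/-- `lam` is an admissible tiling parameter: `lam⁻¹` is an integer `≥ 2`. -/
def TilingParam (lam : ℝ) : Prop := ∃ m : ℕ, 2 ≤ m ∧ lam = 1 / (m : ℝ)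

/-- The open tile with indices `k, h` in the tiling of the unit square with tiles of side `lam`. -/
def tile (lam : ℝ) (k h : ℕ) : Set Pt :=
  {x : Pt | x 0 ∈ Set.Ioo (-(1/2) + (k : ℝ) * lam) (-(1/2) + ((k : ℝ) + 1) * lam) ∧
            x 1 ∈ Set.Ioo (-(1/2) + (h : ℝ) * lam) (-(1/2) + ((h : ℝ) + 1) * lam)}

/-- `Q` is a tile of the tiling `T_lam` of the unit square. -/
def IsTile (lam : ℝ) (Q : Set Pt) : Prop :=
  ∃ k h : ℕ, ((k : ℝ) + 1) * lam ≤ 1 ∧ ((h : ℝ) + 1) * lam ≤ 1 ∧ Q = tile lam k h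

/-- The center `r_Q` of the tile with indices `k, h` and side `lam`. -/
def tileCenter (lam : ℝ) (k h : ℕ) : Pt :=
  EuclideanSpace.single 0 (-(1/2) + ((k : ℝ) + 1/2) * lam) +
    EuclideanSpace.single 1 (-(1/2) + ((h : ℝ) + 1/2) * lam)

/-- The `L^∞` norm of a scalar function on the plane. -/
def supNorm (ρ : Pt → ℝ) : ℝ := (eLpNorm ρ ⊤ volume).toReal

/-- Geometric mixing scale with accuracy parameter `κ`: the infimum of all `ε > 0` such that
the average of `ρ` on every ball of radius `ε` is at most `κ‖ρ‖_∞` in absolute value. -/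
def geomScale (κ : ℝ) (ρ : Pt → ℝ) : ℝ :=
  sInf {ε : ℝ | 0 < ε ∧ ∀ x : Pt, |⨍ y in ball x ε, ρ y| ≤ κ * supNorm ρ}

/-- Homogeneous `Ḣ^{-1}(ℝ²)` norm (functional mixing scale), defined by duality. -/
def negNorm (ρ : Pt → ℝ) : ℝ :=
  sSup {v : ℝ | ∃ ξ : Pt → ℝ, ContDiff ℝ (⊤ : ℕ∞) ξ ∧
    (∫ x : Pt, ‖fderiv ℝ ξ x‖ ^ 2) ≤ 1 ∧ v = ∫ x : Pt, ρ x * ξ x}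

/-- Characteristic length scale of `A` with respect to `E` (with accuracy `κ` and parameter
`sbar`): the supremum of radii of balls contained in `E` that are filled with `A` in
proportion more than `1 - ((1-κ)/2)·sbar`. -/
def lengthScale (κ sbar : ℝ) (E A : Set Pt) : ℝ :=
  sSup {r : ℝ | ∃ x : Pt, ball x r ⊆ E ∧
    1 - (1 - κ) / 2 * sbar <
      (volume (A ∩ ball x r)).toReal / (volume (ball x r)).toReal}

/-- A vector field on the plane is divergence free. -/
def DivFree (v : Pt → Pt) : Prop :=
  ∀ x : Pt, (∑ i : Fin 2, fderiv ℝ (fun y => v y i) x (EuclideanSpace.single i 1)) = 0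

/-- `X` is the (incompressible, regular Lagrangian) flow map of the velocity field `u`. -/
def IsFlowMap (u : ℝ → Pt → Pt) (X : ℝ → Pt → Pt) : Prop :=
  (∀ x, X 0 x = x) ∧ (∀ x t, HasDerivAt (fun s => X s x) (u t (X t x)) t) ∧
    (∀ t, MeasurePreserving (X t) volume volume)

/-- `ρ` solves the continuity equation `∂_t ρ + div(uρ) = 0` with divergence-free field `u`,
i.e. `ρ` is transported along the flow of `u`. -/
def TransportedBy (u : ℝ → Pt → Pt) (ρ : ℝ → Pt → ℝ) : Prop :=
  ∃ X, IsFlowMap u X ∧ ∀ t x, ρ t (X t x) = ρ 0 x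

/-- Gagliardo-type homogeneous seminorm of fractional order `k + r` with exponent `p`. -/
def gagliardo (k : ℕ) (r : ℝ) (p : ℝ≥0∞) (f : Pt → Pt) : ℝ≥0∞ :=
  eLpNorm (fun z : Pt × Pt =>
      ‖iteratedFDeriv ℝ k f z.1 - iteratedFDeriv ℝ k f z.2‖ /
        ‖z.1 - z.2‖ ^ (2 / p.toReal + r)) p volume

/-- Homogeneous Sobolev seminorm `Ẇ^{s,p}(ℝ²)` of a vector field: for integer `s` it is the
`L^p` norm of the `s`-th derivative, otherwise the Gagliardo seminorm of order `s`. -/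
def sobolevSeminorm (s : ℝ) (p : ℝ≥0∞) (f : Pt → Pt) : ℝ≥0∞ :=
  if (⌊s⌋₊ : ℝ) = s then eLpNorm (fun x => ‖iteratedFDeriv ℝ ⌊s⌋₊ f x‖) p volume
  else gagliardo ⌊s⌋₊ (s - ⌊s⌋₊) p f

/-- `‖∇ v‖_{L^p(ℝ²)}` as a real number. -/
def gradLp (p : ℝ) (v : Pt → Pt) : ℝ :=
  (eLpNorm (fun x => ‖fderiv ℝ v x‖) (ENNReal.ofReal p) volume).toReal

/-- `‖∇^k v‖_{L^p(ℝ²)}` as a real number. -/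
def gradkLp (k : ℕ) (p : ℝ) (v : Pt → Pt) : ℝ :=
  (eLpNorm (fun x => ‖iteratedFDeriv ℝ k v x‖) (ENNReal.ofReal p) volume).toReal

/-- `‖∇^k v‖_{L^p(Q)}` as a real number. -/
def gradkLpQ (k : ℕ) (p : ℝ) (v : Pt → Pt) : ℝ :=
  (eLpNorm (fun x => ‖iteratedFDeriv ℝ k v x‖) (ENNReal.ofReal p)
    (volume.restrict unitSq)).toReal

/-- Time steps `T_n = ∑_{i=0}^{n-1} τ^i`. -/
def timeStep (τ : ℝ) (n : ℕ) : ℝ := ∑ i ∈ Finset.range n, τ ^ i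

/-- Cellular basic building block `(u₀, ρ₀) ∈ B_{λ,a,p,θ,s}`. -/
structure BuildingBlock (κ sbar lam a : ℝ) (p : ℝ≥0∞) (θ s : ℝ)
    (u0 : ℝ → Pt → Pt) (ρ0 : ℝ → Pt → ℝ) : Prop where
  /-- `u₀ ∈ L^∞_t(Ẇ^{s,p}_x)` on `0 ≤ t ≤ 1` -/
  sobolev_bound : ∃ M : ℝ≥0∞, M ≠ ⊤ ∧ ∀ t ∈ Set.Icc (0:ℝ) 1, sobolevSeminorm s p (u0 t) ≤ M
  /-- `u₀` is divergence free -/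
  div_free : ∀ t ∈ Set.Icc (0:ℝ) 1, DivFree (u0 t)
  /-- `u₀ = 0` on `∂Q` and outside `Q` -/
  zero_outside : ∀ t, ∀ x : Pt, x ∉ unitSq → u0 t x = 0
  /-- `ρ₀` solves the continuity equation with velocity field `u₀` -/
  transport : TransportedBy u0 ρ0
  /-- binary mean-free initial datum: `1` on `A`, constant `c` on `Q ∖ A`,
  with `LS_Q(A) ≥ a` and `|A| = θ` -/
  init : ∃ (A : Set Pt) (c : ℝ), MeasurableSet A ∧ A ⊆ unitSq ∧
      volume A = ENNReal.ofReal θ ∧ a ≤ lengthScale κ sbar unitSq A ∧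
      (∀ x ∈ A, ρ0 0 x = 1) ∧ (∀ x ∈ unitSq \ A, ρ0 0 x = c) ∧
      (∀ x : Pt, x ∉ unitSq → ρ0 0 x = 0) ∧ θ * 1 + (1 - θ) * c = 0
  /-- the tracer is equally distributed among all tiles at time `1` -/
  mixed : ∀ Q : Set Pt, IsTile lam Q → ∫ x in Q, ρ0 1 x = 0

/-- The pair `(u, ρ)` is of `(λ, a, p, θ, s)`-cellular type with time parameter `τ`:
on each time interval `[T_n, T_{n+1})` and each tile of `T_{λ^n}` it is a rescaled
translated basic building block. -/
structure IsCellular (κ sbar lam a : ℝ) (p : ℝ≥0∞) (θ s τ : ℝ)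
    (u : ℝ → Pt → Pt) (ρ : ℝ → Pt → ℝ) : Prop where
  transport : TransportedBy u ρ
  patch : ∀ n k h : ℕ, IsTile (lam ^ n) (tile (lam ^ n) k h) →
    ∃ u0 ρ0, BuildingBlock κ sbar lam a p θ s u0 ρ0 ∧
      ∀ t ∈ Set.Ico (timeStep τ n) (timeStep τ (n + 1)), ∀ x ∈ tile (lam ^ n) k h,
        u t x = (lam ^ n / τ ^ n) •
            u0 ((t - timeStep τ n) / τ ^ n) ((lam ^ n)⁻¹ • (x - tileCenter (lam ^ n) k h)) ∧
        ρ t x = ρ0 ((t - timeStep τ n) / τ ^ n) ((lam ^ n)⁻¹ • (x - tileCenter (lam ^ n) k h))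

/-- Minimal cost `M_{λ,a,p}`: the infimum of `∫₀¹ ‖∇u₀(t,·)‖_{L^p} dt` over all cellular
basic building blocks. -/
def minCost (κ sbar lam a p θ s : ℝ) : ℝ :=
  sInf {v : ℝ | ∃ u0 ρ0, BuildingBlock κ sbar lam a (ENNReal.ofReal p) θ s u0 ρ0 ∧
    v = ∫ t in Set.Icc (0:ℝ) 1, gradLp p (u0 t)}

/-- `u` is a universal mixer: every bounded mean-free initial datum gets mixed. -/
def UniversalMixer (κ : ℝ) (u : ℝ → Pt → Pt) : Prop :=
  ∀ ρ0 : Pt → ℝ, Measurable ρ0 → (∃ M : ℝ, ∀ x, |ρ0 x| ≤ M) → Integrable ρ0 →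
    (∫ x : Pt, ρ0 x) = 0 →
    ∀ ρ : ℝ → Pt → ℝ, ρ 0 = ρ0 → TransportedBy u ρ →
      Tendsto (fun t => geomScale κ (ρ t)) atTop (𝓝 0) ∧
      Tendsto (fun t => negNorm (ρ t)) atTop (𝓝 0)

/-- `a(t)`: the supremum over `x` of the infimum of all radii `r` such that the trajectory
starting at `x` stays in `B(X(t,x), r)` for all times `s ≥ t`. -/
def confRad (X : ℝ → Pt → Pt) (t : ℝ) : ℝ≥0∞ :=
  ⨆ x : Pt, sInf {r : ℝ≥0∞ | ∀ s : ℝ, t ≤ s → edist (X s x) (X t x) < r}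

/-! If `∫₀¹ ‖∇u‖_{L^p} < log 2`, then `Lip(Φ⁻¹) < 2`. As `u` vanishes off `Q`, the trajectory
of the centre `x₀` of the ball cannot leave the closed square, so `Φ(x₀)` lies in the closure of
some tile, and that tile lies in `B(Φ(x₀), √2 λ)`. Hence `Φ⁻¹` maps the tile into
`B(x₀, 2√2 λ) ⊆ B(x₀, r) ⊆ A`, where `ρ(1,·) = 1`, so `ρ(1,·)` does not have mean zero on it. -/

theorem mem_closure_of_hasDerivAt_of_vanishing_off {E : Type*} [NormedAddCommGroup E]
    [NormedSpace ℝ E] {f : ℝ → E} {v : ℝ → E → E} {s : Set E}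
    (hf : ∀ t, HasDerivAt f (v t (f t)) t) (hv : ∀ t x, x ∉ s → v t x = 0)
    {a b : ℝ} (hab : a ≤ b) (ha : f a ∈ closure s) : f b ∈ closure s := by
  have hfc : Continuous f := continuous_iff_continuousAt.2 fun t => (hf t).continuousAt
  set S := Icc a b ∩ f ⁻¹' closure s
  have hSbdd : BddAbove S := ⟨b, fun t ht => ht.1.2⟩
  have hαS : sSup S ∈ S :=
    (isClosed_Icc.inter (isClosed_closure.preimage hfc)).csSup_mem ⟨a, ⟨le_rfl, hab⟩, ha⟩ hSbdd
  set α := sSup S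
  rcases hαS.1.2.eq_or_lt with hαb | hαb
  · exact hαb ▸ hαS.2
  have hout : ∀ t ∈ Ioc α b, f t ∉ closure s := fun t ht hts =>
    ht.1.not_ge (le_csSup hSbdd ⟨⟨hαS.1.1.trans ht.1.le, ht.2⟩, hts⟩)
  -- past time `α` the trajectory stays outside `s`, where it does not move
  have hconst : ∀ t ∈ Ioc α b, f t = f b := fun t ht =>
    (constant_of_has_deriv_right_zero hfc.continuousOn (fun x hx => by
      have hx' : x ∈ Ioc α b := ⟨ht.1.trans_le hx.1, hx.2.le⟩
      simpa [hv x (f x) fun h => hout x hx' (subset_closure h)] using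
        (hf x).hasDerivWithinAt) b ⟨ht.2, le_rfl⟩).symm
  have hlim : Tendsto f (𝓝[>] α) (𝓝 (f b)) :=
    tendsto_const_nhds.congr' <| eventually_of_mem (Ioc_mem_nhdsGT hαb)
      fun t ht => (hconst t ht).symm
  have hfα : f α = f b :=
    tendsto_nhds_unique (hfc.continuousAt.tendsto.mono_left nhdsWithin_le_nhds) hlim
  exact hfα ▸ hαS.2

theorem IsFlowMap.mem_closure {u X : ℝ → Pt → Pt} {s : Set Pt} (hX : IsFlowMap u X)
    (hu : ∀ t x, x ∉ s → u t x = 0) {t : ℝ} (ht : 0 ≤ t) {x : Pt} (hx : x ∈ closure s) :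
    X t x ∈ closure s :=
  mem_closure_of_hasDerivAt_of_vanishing_off (hX.2.1 x) hu ht (by rwa [hX.1 x])

theorem EuclideanSpace.dist_lt_sqrt_card_mul {ι : Type*} [Fintype ι] [Nonempty ι]
    {x y : EuclideanSpace ℝ ι} {δ : ℝ} (h : ∀ i, |x i - y i| < δ) :
    dist x y < √(Fintype.card ι) * δ := by
  have hδ : 0 ≤ δ := (abs_nonneg _).trans (h (Classical.arbitrary ι)).le
  rw [EuclideanSpace.dist_eq, ← Real.sqrt_sq hδ, ← Real.sqrt_mul (Nat.cast_nonneg _)]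
  refine Real.sqrt_lt_sqrt (by positivity) ?_
  calc ∑ i, dist (x i) (y i) ^ 2 < ∑ _i : ι, δ ^ 2 :=
        Finset.sum_lt_sum_of_nonempty Finset.univ_nonempty fun i _ => by
          rw [Real.dist_eq]; exact pow_lt_pow_left₀ (h i) (abs_nonneg _) two_ne_zero
    _ = Fintype.card ι * δ ^ 2 := by simp

theorem closure_unitSq_subset :
    closure unitSq ⊆ {x : Pt | x 0 ∈ Icc (-(1/2) : ℝ) (1/2) ∧ x 1 ∈ Icc (-(1/2) : ℝ) (1/2)} :=
  closure_minimal (fun _ hx => ⟨Ioo_subset_Icc_self hx.1, Ioo_subset_Icc_self hx.2⟩)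
    ((isClosed_Icc.preimage (EuclideanSpace.proj (𝕜 := ℝ) 0).continuous).inter
      (isClosed_Icc.preimage (EuclideanSpace.proj (𝕜 := ℝ) 1).continuous))

theorem exists_nat_le_le_add_one {m : ℕ} (hm : 0 < m) {t : ℝ} (h0 : 0 ≤ t) (htm : t ≤ m) :
    ∃ k : ℕ, k + 1 ≤ m ∧ (k : ℝ) ≤ t ∧ t ≤ k + 1 := by
  rcases htm.lt_or_eq with htm | rfl
  · exact ⟨⌊t⌋₊, (Nat.floor_lt h0).2 htm, Nat.floor_le h0, (Nat.lt_floor_add_one t).le⟩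
  · exact ⟨m - 1, by omega, by simp [Nat.cast_pred hm], by simp [Nat.cast_pred hm]⟩

theorem TilingParam.pos {lam : ℝ} (hlam : TilingParam lam) : 0 < lam := by
  obtain ⟨m, hm, rfl⟩ := hlam
  have : (0 : ℝ) < m := by exact_mod_cast (by omega : 0 < m)
  positivity

theorem TilingParam.exists_index {lam : ℝ} (hlam : TilingParam lam) {x : ℝ}
    (hx : x ∈ Icc (-(1/2) : ℝ) (1/2)) :
    ∃ k : ℕ, ((k : ℝ) + 1) * lam ≤ 1 ∧
      ∀ y ∈ Ioo (-(1/2) + (k : ℝ) * lam) (-(1/2) + ((k : ℝ) + 1) * lam), |y - x| < lam := by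
  obtain ⟨m, hm, rfl⟩ := hlam
  have hm0 : (0 : ℝ) < m := by exact_mod_cast (by omega : 0 < m)
  obtain ⟨k, hkm, hk, hk1⟩ := exists_nat_le_le_add_one (by omega : 0 < m)
    (t := (x + 1/2) * m) (by nlinarith [hx.1]) (by nlinarith [hx.2])
  refine ⟨k, ?_, fun y hy => ?_⟩
  · rw [mul_one_div, div_le_one hm0]; exact_mod_cast hkm
  · have hlo : (k : ℝ) / m ≤ x + 1/2 := by rw [div_le_iff₀ hm0]; linarith
    have hhi : x + 1/2 ≤ k / m + 1 / m := by rw [← add_div, le_div_iff₀ hm0]; linarith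
    rw [mul_one_div, mul_one_div, add_div] at hy
    rw [abs_sub_lt_iff]
    constructor <;> linarith [hy.1, hy.2]

theorem IsTile.isOpen {lam : ℝ} {Q : Set Pt} (hQ : IsTile lam Q) : IsOpen Q := by
  obtain ⟨k, h, -, -, rfl⟩ := hQ
  exact (isOpen_Ioo.preimage (EuclideanSpace.proj (𝕜 := ℝ) 0).continuous).inter
    (isOpen_Ioo.preimage (EuclideanSpace.proj (𝕜 := ℝ) 1).continuous)

theorem IsTile.nonempty {lam : ℝ} {Q : Set Pt} (hQ : IsTile lam Q) (hlam : 0 < lam) :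
    Q.Nonempty := by
  obtain ⟨k, h, -, -, rfl⟩ := hQ
  refine ⟨tileCenter lam k h, ?_, ?_⟩ <;>
    simp [tileCenter] <;> constructor <;> nlinarith

theorem TilingParam.exists_isTile_subset_ball {lam : ℝ} (hlam : TilingParam lam) {w : Pt}
    (hw : w ∈ closure unitSq) : ∃ Q, IsTile lam Q ∧ Q ⊆ ball w (√2 * lam) := by
  obtain ⟨hw0, hw1⟩ := closure_unitSq_subset hw
  obtain ⟨k, hk, hk'⟩ := hlam.exists_index hw0
  obtain ⟨h, hh, hh'⟩ := hlam.exists_index hw1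
  refine ⟨tile lam k h, ⟨k, h, hk, hh, rfl⟩, fun y hy => ?_⟩
  have := EuclideanSpace.dist_lt_sqrt_card_mul (x := y) (y := w) (δ := lam)
    (Fin.forall_fin_two.2 ⟨hk' _ hy.1, hh' _ hy.2⟩)
  simpa using this

theorem setIntegral_ne_zero_of_eqOn_one {α : Type*} [MeasurableSpace α] {μ : Measure α}
    {s : Set α} {f : α → ℝ} (hs : MeasurableSet s) (hμ0 : μ s ≠ 0) (hμ : μ s ≠ ∞)
    (hf : EqOn f 1 s) : ∫ x in s, f x ∂μ ≠ 0 := by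
  rw [setIntegral_congr_fun hs hf]
  simp [measureReal_def, ENNReal.toReal_eq_zero_iff, hμ0, hμ]

theorem minimal_cost_geometric_general (p a lam : ℝ) (ha : 0 < a)
    (u : ℝ → Pt → Pt) (Φ Ψ : Pt → Pt)
    (hu0 : ∀ t : ℝ, ∀ x : Pt, x ∉ unitSq → u t x = 0)
    (hflow : ∃ X : ℝ → Pt → Pt, IsFlowMap u X ∧ X 1 = Φ)
    (hΨl : Function.LeftInverse Ψ Φ)
    (hLip : ∀ x y : Pt, dist (Ψ x) (Ψ y) ≤
      Real.exp (∫ t in Set.Icc (0:ℝ) 1, gradLp p (u t)) * dist x y)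
    (ρ0 : Pt → ℝ) (A : Set Pt)
    (hρA : ∀ x ∈ A, ρ0 x = 1)
    (x0 : Pt) (r : ℝ) (hr : 3 / 4 * a ≤ r)
    (hBQ : ball x0 r ⊆ unitSq) (hBA : ball x0 r ⊆ A)
    (hlam : TilingParam lam) (hlam' : lam ≤ 3 * a / (16 * Real.sqrt 2))
    (hmix : ∀ Q : Set Pt, IsTile lam Q → ∫ y in Q, ρ0 (Ψ y) = 0) :
    Real.log 2 ≤ ∫ t in Set.Icc (0:ℝ) 1, gradLp p (u t) := by
  set C := ∫ t in Set.Icc (0:ℝ) 1, gradLp p (u t)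
  by_contra! hC
  obtain ⟨X, hX, rfl⟩ := hflow
  have hw : X 1 x0 ∈ closure unitSq :=
    hX.mem_closure hu0 zero_le_one (subset_closure (hBQ (mem_ball_self (by linarith))))
  obtain ⟨Q, hQ, hQw⟩ := hlam.exists_isTile_subset_ball hw
  have hradius : Real.exp C * (√2 * lam) < r := by
    have hexp : Real.exp C < 2 := (Real.lt_log_iff_exp_lt two_pos).1 hC
    have hlam16 : √2 * lam * 16 ≤ 3 * a := by
      rw [le_div_iff₀ (by positivity)] at hlam'; linarith
    nlinarith [mul_pos (Real.sqrt_pos.2 two_pos) hlam.pos]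
  have hΨQ : ∀ y ∈ Q, Ψ y ∈ ball x0 r := fun y hy =>
    calc dist (Ψ y) x0 = dist (Ψ y) (Ψ (X 1 x0)) := by rw [hΨl]
      _ ≤ Real.exp C * dist y (X 1 x0) := hLip _ _
      _ < r := lt_of_le_of_lt (by gcongr; exact (hQw hy).le) hradius
  exact setIntegral_ne_zero_of_eqOn_one hQ.isOpen.measurableSet
    (hQ.isOpen.measure_pos volume (hQ.nonempty hlam.pos)).ne'
    (measure_mono hQw |>.trans_lt measure_ball_lt_top).ne
    (fun y hy => hρA _ (hBA (hΨQ y hy))) (hmix Q hQ)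

/-- **Minimal cost, simplified geometric version.** Suppose the time-1 flow map `Φ` of the
divergence-free field `u` (supported in the unit square) has inverse `Ψ` with
`Lip(Φ⁻¹) ≤ exp(∫₀¹‖∇u‖_{L^p})`, the initial datum is binary mean-free with a ball
`B(x₀,r) ⊆ A`, `r ≥ (3/4)a`, and the tracer is equally distributed among the tiles of a
tiling of parameter `λ ≤ 3a/(16√2)` at time `1`. Then `∫₀¹‖∇u(s,·)‖_{L^p} ds ≥ log 2 > 0`. -/
theorem minimal_cost_geometric (p a lam c : ℝ) (hp : 1 < p) (ha : 0 < a)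
    (u : ℝ → Pt → Pt) (Φ Ψ : Pt → Pt)
    (hdiv : ∀ t ∈ Set.Icc (0:ℝ) 1, DivFree (u t))
    (hu0 : ∀ t : ℝ, ∀ x : Pt, x ∉ unitSq → u t x = 0)
    (hflow : ∃ X : ℝ → Pt → Pt, IsFlowMap u X ∧ X 1 = Φ)
    (hΨl : Function.LeftInverse Ψ Φ) (hΨr : Function.RightInverse Ψ Φ)
    (hLip : ∀ x y : Pt, dist (Ψ x) (Ψ y) ≤
      Real.exp (∫ t in Set.Icc (0:ℝ) 1, gradLp p (u t)) * dist x y)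
    (ρ0 : Pt → ℝ) (A : Set Pt) (hA : MeasurableSet A) (hAQ : A ⊆ unitSq)
    (hA0 : 0 < volume A) (hA2 : volume A ≤ ENNReal.ofReal (1 / 2))
    (hρA : ∀ x ∈ A, ρ0 x = 1) (hρc : ∀ x ∈ unitSq \ A, ρ0 x = c)
    (hρout : ∀ x : Pt, x ∉ unitSq → ρ0 x = 0)
    (hc : -1 ≤ c ∧ c < 0) (hmean : (∫ x in unitSq, ρ0 x) = 0)
    (x0 : Pt) (r : ℝ) (hr : 3 / 4 * a ≤ r)
    (hBQ : ball x0 r ⊆ unitSq) (hBA : ball x0 r ⊆ A)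
    (hlam : TilingParam lam) (hlam' : lam ≤ 3 * a / (16 * Real.sqrt 2))
    (hmix : ∀ Q : Set Pt, IsTile lam Q → ∫ y in Q, ρ0 (Ψ y) = 0) :
    Real.log 2 ≤ ∫ t in Set.Icc (0:ℝ) 1, gradLp p (u t) :=
  minimal_cost_geometric_general p a lam ha u Φ Ψ hu0 hflow hΨl hLip ρ0 A hρA x0 r hr hBQ hBA hlam
    hlam' hmix

end
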